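/- Let E be a nonempty complete separable metric space and let ν be a Borel probability measure on the space C(ℝ; E) of continuous functions from ℝ to E (with the topology of locally uniform convergence). For t ∈ ℝ let S_t : C(ℝ;E) → C(ℝ;E) denote the time shift (S_t ω)(s) = ω(s+t). Assume: (i) ν({ω ∈ C(ℝ;E) : ω is a constant function}) = 1, and (ii) ν(B) ∈ {0,1} for every Borel set B ⊆ C(ℝ;E) that is shift invariant, i.e. S_t^{−1}(B) = B for all t ∈ ℝ. Then there exists x ∈ E such that ν({ω : ω(s) = x for all s ∈ ℝ}) = 1. -/
import Mathlib


open MeasureTheory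

/-- The time shift `S_t` on the trajectory space `C(ℝ; E)`: `(S_t ω)(s) = ω (s + t)`. -/
noncomputable def shiftCR {E : Type*} [TopologicalSpace E] (t : ℝ) (ω : C(ℝ, E)) : C(ℝ, E) :=
  ω.comp ⟨fun s => s + t, continuous_add_right t⟩

theorem stmt_14 {E : Type*} [MetricSpace E] [CompleteSpace E]
    [TopologicalSpace.SeparableSpace E] [Nonempty E]
    [MeasurableSpace C(ℝ, E)] [BorelSpace C(ℝ, E)]
    (ν : Measure C(ℝ, E)) [IsProbabilityMeasure ν]
    (hconst : ν {ω : C(ℝ, E) | ∃ x : E, ∀ s : ℝ, ω s = x} = 1)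
    (herg : ∀ B : Set C(ℝ, E), MeasurableSet B →
      (∀ t : ℝ, shiftCR t ⁻¹' B = B) → ν B = 0 ∨ ν B = 1) :
    ∃ x : E, ν {ω : C(ℝ, E) | ∀ s : ℝ, ω s = x} = 1 := by
  borelize E
  classical
  set ev0 : C(ℝ, E) → E := fun ω => ω 0 with hev0
  have hev0cont : Continuous ev0 := continuous_eval_const 0
  set C : Set C(ℝ, E) := {ω | ∀ s : ℝ, ω s = ω 0} with hCdef
  -- constant trajectories: rational determination
  have hconst_of_rat : ∀ ω : C(ℝ, E), (∀ q : ℚ, ω (q : ℝ) = ω 0) → ∀ s : ℝ, ω s = ω 0 := by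
    intro ω h s
    have hclosed : IsClosed {s : ℝ | ω s = ω 0} :=
      isClosed_eq (map_continuous ω) continuous_const
    have hdense : Dense {s : ℝ | ω s = ω 0} := by
      apply Dense.mono _ Rat.denseRange_cast
      rintro _ ⟨q, rfl⟩
      exact h q
    have : {s : ℝ | ω s = ω 0} = Set.univ := hclosed.closure_eq ▸ hdense.closure_eq
    exact (this ▸ Set.mem_univ s : s ∈ {s : ℝ | ω s = ω 0})
  have hCmeas : MeasurableSet C := by
    have hCeq : C = ⋂ q : ℚ, {ω : C(ℝ, E) | ω (q : ℝ) = ω 0} := by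
      ext ω
      simp only [hCdef, Set.mem_iInter, Set.mem_setOf_eq]
      exact ⟨fun h q => h q, fun h => hconst_of_rat ω h⟩
    rw [hCeq]
    refine MeasurableSet.iInter fun q => ?_
    exact (isClosed_eq (continuous_eval_const (q : ℝ))
      (continuous_eval_const 0)).measurableSet
  have hC1 : ν C = 1 := by
    have : {ω : C(ℝ, E) | ∃ x : E, ∀ s : ℝ, ω s = x} = C := by
      ext ω
      constructor
      · rintro ⟨x, hx⟩ s; rw [hx s, hx 0]
      · intro h; exact ⟨ω 0, h⟩
    rw [← this]; exact hconst
  have hCc0 : ν Cᶜ = 0 := by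
    rw [measure_compl hCmeas (measure_ne_top ν C), hC1, measure_univ, tsub_self]
  -- key: ergodicity gives 0-1 law for ev0-preimages
  have key : ∀ A : Set E, MeasurableSet A → ν (ev0 ⁻¹' A) = 0 ∨ ν (ev0 ⁻¹' A) = 1 := by
    intro A hA
    have hBmeas : MeasurableSet (C ∩ ev0 ⁻¹' A) :=
      hCmeas.inter (hev0cont.measurable hA)
    have hinv : ∀ t : ℝ, shiftCR t ⁻¹' (C ∩ ev0 ⁻¹' A) = C ∩ ev0 ⁻¹' A := by
      intro t
      ext ω
      simp only [Set.mem_preimage, Set.mem_inter_iff, Set.mem_setOf_eq, hCdef, hev0,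
        shiftCR, ContinuousMap.comp_apply, ContinuousMap.coe_mk]
      constructor
      · rintro ⟨h1, h2⟩
        have h0t : ω (0 + t) = ω t := by rw [zero_add]
        have hconstω : ∀ s : ℝ, ω s = ω 0 := by
          intro s
          have := h1 (s - t)
          rw [sub_add_cancel] at this
          have h0 := h1 (0 - t)
          rw [sub_add_cancel] at h0
          rw [this, ← h0]
        refine ⟨hconstω, ?_⟩
        have : ω (0 + t) = ω 0 := hconstω (0 + t)
        rw [← this]; exact h2
      · rintro ⟨h1, h2⟩
        constructor
        · intro s; rw [h1 (s + t), h1 (0 + t)]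
        · rw [h1 (0 + t)]; exact h2
    have heq : ν (ev0 ⁻¹' A) = ν (C ∩ ev0 ⁻¹' A) := by
      rw [Set.inter_comm]
      exact (measure_inter_conull hCc0).symm
    rw [heq]
    exact herg _ hBmeas hinv
  -- find the Dirac point via nested closed balls
  obtain ⟨u, hu⟩ := TopologicalSpace.exists_dense_seq E
  have hball : ∀ n : ℕ, ∃ k : ℕ,
      ν (ev0 ⁻¹' Metric.closedBall (u k) (1 / (n + 1))) = 1 := by
    intro n
    by_contra h
    push_neg at h
    have h0 : ∀ k : ℕ, ν (ev0 ⁻¹' Metric.closedBall (u k) (1 / (n + 1))) = 0 := by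
      intro k
      rcases key _ Metric.isClosed_closedBall.measurableSet with h' | h'
      · exact h'
      · exact absurd h' (h k)
    have hcover : (⋃ k : ℕ, ev0 ⁻¹' Metric.closedBall (u k) (1 / (n + 1))) = Set.univ := by
      apply Set.eq_univ_of_forall
      intro ω
      have hpos : (0 : ℝ) < 1 / (n + 1) := by positivity
      obtain ⟨k, hk⟩ := (Metric.denseRange_iff.mp hu) (ev0 ω) (1 / (n + 1)) hpos
      exact Set.mem_iUnion.mpr ⟨k, Metric.ball_subset_closedBall (by
        rw [Metric.mem_ball]; exact hk)⟩
    have : ν Set.univ = 0 := by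
      rw [← hcover]
      exact measure_iUnion_null h0
    rw [measure_univ] at this
    exact one_ne_zero this
  choose f hf using hball
  set K : Set E := ⋂ n : ℕ, Metric.closedBall (u (f n)) (1 / (n + 1)) with hKdef
  have hK1 : ν (ev0 ⁻¹' K) = 1 := by
    have hpre : ev0 ⁻¹' K = ⋂ n : ℕ, ev0 ⁻¹' Metric.closedBall (u (f n)) (1 / (n + 1)) := by
      simp [hKdef, Set.preimage_iInter]
    rw [hpre]
    have hc : ν (⋃ n : ℕ, (ev0 ⁻¹' Metric.closedBall (u (f n)) (1 / (n + 1)))ᶜ) = 0 := by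
      refine measure_iUnion_null fun n => ?_
      have hm : MeasurableSet (ev0 ⁻¹' Metric.closedBall (u (f n)) (1 / (n + 1))) :=
        hev0cont.measurable Metric.isClosed_closedBall.measurableSet
      rw [measure_compl hm (measure_ne_top ν _), hf n, measure_univ, tsub_self]
    have hcompl : (⋂ n : ℕ, ev0 ⁻¹' Metric.closedBall (u (f n)) (1 / (n + 1)))ᶜ
        = ⋃ n : ℕ, (ev0 ⁻¹' Metric.closedBall (u (f n)) (1 / (n + 1)))ᶜ := by
      simp [Set.compl_iInter]
    have hmK : MeasurableSet (⋂ n : ℕ, ev0 ⁻¹' Metric.closedBall (u (f n)) (1 / (n + 1))) :=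
      MeasurableSet.iInter fun n => hev0cont.measurable Metric.isClosed_closedBall.measurableSet
    have := measure_compl hmK (measure_ne_top ν _)
    rw [hcompl, hc, measure_univ] at this
    have h1 : (1 : ENNReal) ≤ ν (⋂ n : ℕ, ev0 ⁻¹' Metric.closedBall (u (f n)) (1 / (n + 1))) :=
      tsub_eq_zero_iff_le.mp this.symm
    exact le_antisymm prob_le_one h1
  have hKne : K.Nonempty := by
    by_contra h
    rw [Set.not_nonempty_iff_eq_empty] at h
    rw [h, Set.preimage_empty, measure_empty] at hK1
    exact zero_ne_one hK1
  obtain ⟨x, hx⟩ := hKne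
  refine ⟨x, ?_⟩
  have hKsub : K ⊆ {x} := by
    intro y hy
    have hle : ∀ n : ℕ, dist x y ≤ 2 * (1 / (n + 1)) := by
      intro n
      have hx' : dist x (u (f n)) ≤ 1 / (n + 1) := by
        have := Set.mem_iInter.mp hx n
        rwa [Metric.mem_closedBall] at this
      have hy' : dist (u (f n)) y ≤ 1 / (n + 1) := by
        have := Set.mem_iInter.mp hy n
        rw [Metric.mem_closedBall] at this
        rwa [dist_comm]
      calc dist x y ≤ dist x (u (f n)) + dist (u (f n)) y := dist_triangle _ _ _
        _ ≤ 1 / (n + 1) + 1 / (n + 1) := add_le_add hx' hy'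
        _ = 2 * (1 / (n + 1)) := by ring
    have htend : Filter.Tendsto (fun n : ℕ => 2 * (1 / ((n : ℝ) + 1))) Filter.atTop (nhds 0) := by
      have := tendsto_one_div_add_atTop_nhds_zero_nat.const_mul (2 : ℝ)
      simpa using this
    have hdist : dist x y ≤ 0 := ge_of_tendsto' htend hle
    have : dist x y = 0 := le_antisymm hdist dist_nonneg
    have : x = y := dist_eq_zero.mp this
    simp [this.symm]
  have hsub : ev0 ⁻¹' K ⊆ ev0 ⁻¹' {x} := Set.preimage_mono hKsub
  have hx1 : ν (ev0 ⁻¹' {x}) = 1 :=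
    le_antisymm prob_le_one (hK1 ▸ measure_mono hsub)
  have hset : {ω : C(ℝ, E) | ∀ s : ℝ, ω s = x} = ev0 ⁻¹' {x} ∩ C := by
    ext ω
    simp only [Set.mem_inter_iff, Set.mem_preimage, Set.mem_singleton_iff, Set.mem_setOf_eq,
      hCdef, hev0]
    constructor
    · intro h
      exact ⟨h 0, fun s => by rw [h s, h 0]⟩
    · rintro ⟨h0, h1⟩ s
      rw [h1 s, h0]
  rw [hset, measure_inter_conull hCc0, hx1]
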